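/- With a = (2·6^h − 4^h)/9^h and b = −4^h/9^h, the inequality k·a + (k²−k)·b ≤ 1 holds for every integer k with 1 ≤ k ≤ 2^h. -/
import Mathlib

theorem lp_dual_feasible (h : ℕ) (a b : ℝ)
    (ha : a = (2 * 6 ^ h - 4 ^ h) / 9 ^ h)
    (hb : b = -(4 ^ h) / 9 ^ h)
    (k : ℤ) (hk1 : 1 ≤ k) (hk2 : k ≤ 2 ^ h) :
    (k : ℝ) * a + ((k : ℝ) ^ 2 - (k : ℝ)) * b ≤ 1 := by
  subst ha hb
  have h4 : (4:ℝ)^h = (2:ℝ)^h * (2:ℝ)^h := by rw [← mul_pow]; norm_num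
  have h6 : (6:ℝ)^h = (3:ℝ)^h * (2:ℝ)^h := by rw [← mul_pow]; norm_num
  have h9 : (9:ℝ)^h = (3:ℝ)^h * (3:ℝ)^h := by rw [← mul_pow]; norm_num
  have h9p : (0:ℝ) < 9 ^ h := by positivity
  have heq : (k:ℝ) * ((2 * 6 ^ h - 4 ^ h) / 9 ^ h) + ((k:ℝ) ^ 2 - (k:ℝ)) * (-(4 ^ h) / 9 ^ h)
      = ((k:ℝ) * (2 * 6 ^ h - 4 ^ h) + ((k:ℝ) ^ 2 - (k:ℝ)) * (-(4 ^ h))) / 9 ^ h := by ring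
  rw [heq, div_le_one h9p, h4, h6, h9]
  nlinarith [sq_nonneg ((3:ℝ)^h - (k:ℝ) * 2^h)]
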